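/- arXiv:2203.00570 — 3 statements merged into one kernel-verified Lean document; each statement's English description precedes it below -/
import Mathlib

section
/- Let $Y \in \mathbb{R}^{n \times m}$ with $Y^\top Y$ positive definite, and let $\sigma > 0$. Then the function $\Theta \mapsto \|Y\Theta - Y\|_F^2 + 2n\sigma^2\,\mathrm{tr}(\Theta)$ over $\Theta \in \mathbb{R}^{m\times m}$ attains its global minimum at $\hat{\Theta}_1 = I_m - n\sigma^2 (Y^\top Y)^{-1}$. -/
open MeasureTheory ProbabilityTheory Matrix

noncomputable def frobSq {n m : ℕ} (M : Matrix (Fin n) (Fin m) ℝ) : ℝ :=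
  ∑ i, ∑ j, (M i j) ^ 2

lemma frobSq_nonneg {n m : ℕ} (M : Matrix (Fin n) (Fin m) ℝ) : 0 ≤ frobSq M := by
  unfold frobSq; positivity

lemma trace_transpose_mul {n m : ℕ} (B C : Matrix (Fin n) (Fin m) ℝ) :
    Matrix.trace (Bᵀ * C) = ∑ i, ∑ j, B i j * C i j := by
  simp only [Matrix.trace, Matrix.diag, Matrix.mul_apply, Matrix.transpose_apply]
  rw [Finset.sum_comm]

lemma frobSq_add {n m : ℕ} (B C : Matrix (Fin n) (Fin m) ℝ) :
    frobSq (B + C) = frobSq B + frobSq C + 2 * Matrix.trace (Bᵀ * C) := by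
  rw [trace_transpose_mul]
  simp only [frobSq, Matrix.add_apply]
  rw [← Finset.sum_add_distrib, Finset.mul_sum, ← Finset.sum_add_distrib]
  congr 1; ext i
  rw [← Finset.sum_add_distrib, Finset.mul_sum, ← Finset.sum_add_distrib]
  congr 1; ext j; ring

theorem stmt5 {n m : ℕ} (Y : Matrix (Fin n) (Fin m) ℝ) (σ : ℝ) (hσ : 0 < σ)
    (hY : (Yᵀ * Y).PosDef) :
    ∀ Θ : Matrix (Fin m) (Fin m) ℝ,
      frobSq (Y * ((1 : Matrix (Fin m) (Fin m) ℝ) - ((n : ℝ) * σ ^ 2) • (Yᵀ * Y)⁻¹) - Y)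
          + 2 * (n : ℝ) * σ ^ 2 *
            Matrix.trace ((1 : Matrix (Fin m) (Fin m) ℝ) - ((n : ℝ) * σ ^ 2) • (Yᵀ * Y)⁻¹)
        ≤ frobSq (Y * Θ - Y) + 2 * (n : ℝ) * σ ^ 2 * Matrix.trace Θ := by
  intro Θ
  set c : ℝ := (n : ℝ) * σ ^ 2 with hc
  set A : Matrix (Fin m) (Fin m) ℝ := Yᵀ * Y with hA
  have hAT : Aᵀ = A := by rw [hA, Matrix.transpose_mul, Matrix.transpose_transpose]
  have hinv : A⁻¹ * A = 1 := Matrix.nonsing_inv_mul A (isUnit_iff_ne_zero.mpr (ne_of_gt hY.det_pos))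
  set Θh : Matrix (Fin m) (Fin m) ℝ := 1 - c • A⁻¹ with hΘh
  set Δ : Matrix (Fin m) (Fin m) ℝ := Θ - Θh with hΔ
  have hΘ : Θ = Θh + Δ := by rw [hΔ]; abel
  have hB : Y * Θh - Y = (-c) • (Y * A⁻¹) := by
    rw [hΘh, Matrix.mul_sub, Matrix.mul_one, Matrix.mul_smul, neg_smul]; abel
  have expand : Y * Θ - Y = (Y * Θh - Y) + Y * Δ := by
    rw [hΘ, Matrix.mul_add]; abel
  have cross : Matrix.trace ((Y * Θh - Y)ᵀ * (Y * Δ)) = -c * Matrix.trace Δ := by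
    rw [hB, Matrix.transpose_smul, Matrix.transpose_mul, Matrix.transpose_nonsing_inv, hAT,
      Matrix.smul_mul, Matrix.trace_smul]
    have : A⁻¹ * Yᵀ * (Y * Δ) = Δ := by
      rw [Matrix.mul_assoc, ← Matrix.mul_assoc Yᵀ, ← hA, ← Matrix.mul_assoc, hinv, Matrix.one_mul]
    rw [this, smul_eq_mul]
  have hexp : frobSq (Y * Θ - Y) =
      frobSq (Y * Θh - Y) + frobSq (Y * Δ) + 2 * (-c * Matrix.trace Δ) := by
    rw [expand, frobSq_add, cross]
  have htr : Matrix.trace Θ = Matrix.trace Θh + Matrix.trace Δ := by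
    rw [hΘ, Matrix.trace_add]
  have hnn := frobSq_nonneg (Y * Δ)
  rw [hexp, htr]
  ring_nf
  nlinarith [hnn]
end

section
/- Let $Y \in \mathbb{R}^{n \times m}$, let $u \in \mathbb{R}^m$ be the all-ones vector, $\mu_Y = \frac{1}{m} Y u$ the empirical mean, and $C_Y = \frac{1}{m}(YY^\top - \frac{1}{m} Yuu^\top Y^\top)$ the empirical covariance, assumed positive definite. Then the function $(\Theta, \beta) \mapsto \|\Theta Y + \beta u^\top - Y\|_F^2 + 2m\sigma^2\,\mathrm{tr}(\Theta)$ attains its global minimum at $\hat{\Theta}_1 = (C_Y - \sigma^2 I_n) C_Y^{-1}$ and $\hat{\beta}_1 = (I_n - \hat{\Theta}_1)\mu_Y$. -/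
open MeasureTheory ProbabilityTheory Matrix

def onesVec (m : ℕ) : Fin m → ℝ := fun _ => 1

noncomputable def covM {n m : ℕ} (Y : Matrix (Fin n) (Fin m) ℝ) : Matrix (Fin n) (Fin n) ℝ :=
  (m : ℝ)⁻¹ • (Y * Yᵀ - (m : ℝ)⁻¹ • (Y * vecMulVec (onesVec m) (onesVec m) * Yᵀ))

noncomputable def meanV {n m : ℕ} (Y : Matrix (Fin n) (Fin m) ℝ) : Fin n → ℝ :=
  (m : ℝ)⁻¹ • Y.mulVec (onesVec m)

/-!
Write `Y = Z + μ uᵀ` with `Z` the centered data, so that `Z u = 0` and `Z Zᵀ = m C`. With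
`Δ = Θ - I`, the residual is `Δ Z + (Δ μ + β) uᵀ`, and since `Z u = 0` the two parts are
orthogonal: the objective equals `m tr(Δ C Δᵀ) + m ‖Δ μ + β‖² + 2 m σ² tr Θ`. Completing the
square in `Δ` turns this into
`m tr((Δ + σ² C⁻¹) C (Δ + σ² C⁻¹)ᵀ) + m ‖Δ μ + β‖² + m (2 σ² n - σ⁴ tr C⁻¹)`,
whose first two terms are nonnegative because `C` is positive definite, and both vanish at
`Θ̂ = I - σ² C⁻¹`, `β̂ = (I - Θ̂) μ`.
-/

theorem Matrix.add_vecMulVec_mul_transpose_of_mulVec_eq_zero {l m R : Type*} [Fintype m]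
    [CommRing R] {A : Matrix l m R} {u : m → R} (hA : A *ᵥ u = 0) (b : l → R) :
    (A + vecMulVec b u) * (A + vecMulVec b u)ᵀ = A * Aᵀ + (u ⬝ᵥ u) • vecMulVec b b := by
  rw [transpose_add, transpose_vecMulVec, Matrix.add_mul, Matrix.mul_add, Matrix.mul_add,
    mul_vecMulVec, hA, vecMulVec_mul, vecMul_transpose, hA, vecMulVec_mul_vecMulVec,
    vecMulVec_smul]
  simp

theorem Matrix.trace_add_smul_inv_mul_mul_transpose {ι R : Type*} [Fintype ι] [DecidableEq ι]
    [CommRing R] {C : Matrix ι ι R} (hdet : IsUnit C.det) (hC : Cᵀ = C) (Δ : Matrix ι ι R)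
    (s : R) :
    trace ((Δ + s • C⁻¹) * C * (Δ + s • C⁻¹)ᵀ)
      = trace (Δ * C * Δᵀ) + 2 * s * trace Δ + s ^ 2 * trace C⁻¹ := by
  have hinv : C⁻¹ᵀ = C⁻¹ := by rw [transpose_nonsing_inv, hC]
  simp only [transpose_add, transpose_smul, hinv, Matrix.add_mul, Matrix.mul_add, Matrix.smul_mul,
    Matrix.mul_smul, mul_nonsing_inv_cancel_right _ _ hdet, nonsing_inv_mul _ hdet, Matrix.one_mul,
    trace_add, trace_smul, trace_transpose, smul_eq_mul]
  ring

theorem frobSq_eq_trace {n m : ℕ} (M : Matrix (Fin n) (Fin m) ℝ) :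
    frobSq M = trace (M * Mᵀ) := by
  simp [frobSq, trace, mul_apply, sq]

section Centering

variable {n m : ℕ} (Y : Matrix (Fin n) (Fin m) ℝ)

noncomputable def centeredData : Matrix (Fin n) (Fin m) ℝ :=
  Y - vecMulVec (meanV Y) (onesVec m)

theorem onesVec_dotProduct_self (m : ℕ) : onesVec m ⬝ᵥ onesVec m = m := by
  simp [onesVec, dotProduct]

theorem natCast_smul_meanV : (m : ℝ) • meanV Y = Y *ᵥ onesVec m := by
  rcases eq_or_ne m 0 with rfl | hm
  · ext i
    simp [mulVec, dotProduct]
  · exact smul_inv_smul₀ (Nat.cast_ne_zero.mpr hm) _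

theorem centeredData_mulVec_onesVec : centeredData Y *ᵥ onesVec m = 0 := by
  rw [centeredData, sub_mulVec, vecMulVec_mulVec, onesVec_dotProduct_self, ← natCast_smul_meanV,
    op_smul_eq_smul, sub_self]

theorem centeredData_mul_transpose : centeredData Y * (centeredData Y)ᵀ = (m : ℝ) • covM Y := by
  rcases eq_or_ne m 0 with rfl | hm
  · ext i j
    simp [mul_apply]
  have hY : Y = centeredData Y + vecMulVec (meanV Y) (onesVec m) := (sub_add_cancel _ _).symm
  have hYY : Y * Yᵀ
      = centeredData Y * (centeredData Y)ᵀ + (m : ℝ) • vecMulVec (meanV Y) (meanV Y) := by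
    conv_lhs => rw [hY]
    rw [add_vecMulVec_mul_transpose_of_mulVec_eq_zero (centeredData_mulVec_onesVec Y),
      onesVec_dotProduct_self]
  have hYJY : Y * vecMulVec (onesVec m) (onesVec m) * Yᵀ
      = ((m : ℝ) * m) • vecMulVec (meanV Y) (meanV Y) := by
    rw [mul_vecMulVec, vecMulVec_mul, vecMul_transpose, ← natCast_smul_meanV, smul_vecMulVec,
      vecMulVec_smul, smul_smul]
  have hm' : (m : ℝ) ≠ 0 := Nat.cast_ne_zero.mpr hm
  rw [covM, hYY, hYJY, smul_smul, mul_inv_cancel₀ hm', one_smul, smul_smul,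
    inv_mul_cancel_left₀ hm', add_sub_cancel_right]

end Centering

section Residual

variable {n m : ℕ} (Y : Matrix (Fin n) (Fin m) ℝ)

theorem residual_eq_mul_centeredData_add (Θ : Matrix (Fin n) (Fin n) ℝ) (β : Fin n → ℝ) :
    Θ * Y + vecMulVec β (onesVec m) - Y
      = (Θ - 1) * centeredData Y + vecMulVec ((Θ - 1) *ᵥ meanV Y + β) (onesVec m) := by
  rw [centeredData, Matrix.mul_sub, mul_vecMulVec, add_vecMulVec, Matrix.sub_mul, Matrix.one_mul]
  abel

theorem frobSq_residual_eq (Θ : Matrix (Fin n) (Fin n) ℝ) (β : Fin n → ℝ) :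
    frobSq (Θ * Y + vecMulVec β (onesVec m) - Y)
      = m * trace ((Θ - 1) * covM Y * (Θ - 1)ᵀ)
        + m * (((Θ - 1) *ᵥ meanV Y + β) ⬝ᵥ ((Θ - 1) *ᵥ meanV Y + β)) := by
  have hA : ((Θ - 1) * centeredData Y) *ᵥ onesVec m = 0 := by
    rw [← mulVec_mulVec, centeredData_mulVec_onesVec, mulVec_zero]
  rw [frobSq_eq_trace, residual_eq_mul_centeredData_add,
    add_vecMulVec_mul_transpose_of_mulVec_eq_zero hA, transpose_mul, Matrix.mul_assoc,
    ← Matrix.mul_assoc (centeredData Y), centeredData_mul_transpose, Matrix.smul_mul,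
    Matrix.mul_smul, ← Matrix.mul_assoc, onesVec_dotProduct_self, trace_add, trace_smul,
    trace_smul, trace_vecMulVec, smul_eq_mul, smul_eq_mul]

theorem frobSq_residual_add_trace_eq (hdet : IsUnit (covM Y).det) (hsymm : (covM Y)ᵀ = covM Y)
    (σ : ℝ) (Θ : Matrix (Fin n) (Fin n) ℝ) (β : Fin n → ℝ) :
    frobSq (Θ * Y + vecMulVec β (onesVec m) - Y) + 2 * (m : ℝ) * σ ^ 2 * trace Θ
      = m * trace ((Θ - 1 + σ ^ 2 • (covM Y)⁻¹) * covM Y * (Θ - 1 + σ ^ 2 • (covM Y)⁻¹)ᵀ)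
        + m * (((Θ - 1) *ᵥ meanV Y + β) ⬝ᵥ ((Θ - 1) *ᵥ meanV Y + β))
        + m * (2 * σ ^ 2 * n - (σ ^ 2) ^ 2 * trace (covM Y)⁻¹) := by
  rw [frobSq_residual_eq, trace_add_smul_inv_mul_mul_transpose hdet hsymm, trace_sub, trace_one,
    Fintype.card_fin]
  ring

end Residual

theorem Matrix.PosSemidef.trace_mul_mul_transpose_nonneg {ι κ : Type*} [Fintype ι] [Fintype κ]
    {C : Matrix ι ι ℝ} (hC : C.PosSemidef) (B : Matrix κ ι ℝ) : 0 ≤ trace (B * C * Bᵀ) := by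
  simpa [conjTranspose_eq_transpose_of_trivial] using (hC.mul_mul_conjTranspose_same B).trace_nonneg

theorem stmt8 {n m : ℕ} (Y : Matrix (Fin n) (Fin m) ℝ) (σ : ℝ)
    (hC : (covM Y).PosDef) :
    ∀ (Θ : Matrix (Fin n) (Fin n) ℝ) (β : Fin n → ℝ),
      frobSq ((covM Y - σ ^ 2 • (1 : Matrix (Fin n) (Fin n) ℝ)) * (covM Y)⁻¹ * Y
            + vecMulVec (((1 : Matrix (Fin n) (Fin n) ℝ)
                - (covM Y - σ ^ 2 • (1 : Matrix (Fin n) (Fin n) ℝ)) * (covM Y)⁻¹).mulVec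
              (meanV Y)) (onesVec m) - Y)
          + 2 * (m : ℝ) * σ ^ 2 *
            Matrix.trace ((covM Y - σ ^ 2 • (1 : Matrix (Fin n) (Fin n) ℝ)) * (covM Y)⁻¹)
        ≤ frobSq (Θ * Y + vecMulVec β (onesVec m) - Y)
          + 2 * (m : ℝ) * σ ^ 2 * Matrix.trace Θ := by
  intro Θ β
  have hdet : IsUnit (covM Y).det := (isUnit_iff_isUnit_det _).mp hC.isUnit
  have hsymm : (covM Y)ᵀ = covM Y := by simpa using hC.isHermitian.eq
  set Θhat := (covM Y - σ ^ 2 • (1 : Matrix (Fin n) (Fin n) ℝ)) * (covM Y)⁻¹ with hΘhat_def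
  have hΘhat : Θhat - 1 + σ ^ 2 • (covM Y)⁻¹ = 0 := by
    rw [hΘhat_def, Matrix.sub_mul, mul_nonsing_inv _ hdet, Matrix.smul_mul, Matrix.one_mul]
    abel
  have hβhat : (Θhat - 1) *ᵥ meanV Y + (1 - Θhat) *ᵥ meanV Y = 0 := by
    rw [← add_mulVec, sub_add_sub_cancel, sub_self, zero_mulVec]
  rw [frobSq_residual_add_trace_eq Y hdet hsymm, frobSq_residual_add_trace_eq Y hdet hsymm,
    hΘhat, hβhat]
  have hΘ := hC.posSemidef.trace_mul_mul_transpose_nonneg (Θ - 1 + σ ^ 2 • (covM Y)⁻¹)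
  have hβ : 0 ≤ ((Θ - 1) *ᵥ meanV Y + β) ⬝ᵥ ((Θ - 1) *ᵥ meanV Y + β) :=
    Finset.sum_nonneg fun _ _ => mul_self_nonneg _
  simp only [Matrix.zero_mul, trace_zero, dotProduct_zero, mul_zero, zero_add]
  have hm : (0 : ℝ) ≤ m := m.cast_nonneg
  linarith [mul_nonneg hm hΘ, mul_nonneg hm hβ]
end

section
/- Let $Y \in \mathbb{R}^{n\times m}$, $P, Q$ orthogonal, and $U \in \mathbb{R}^{n\times m}$ all-ones. Suppose all entries of $PYQ$ are nonzero. Then the function $\Theta \mapsto \|P^\top(\Theta \odot (PYQ))Q^\top - Y\|_F^2 + 2\sigma^2\langle U, \Theta\rangle_F$ over $\Theta \in \mathbb{R}^{n\times m}$ attains its global minimum at $\hat{\Theta}$ with $\hat{\Theta}_{i,j} = 1 - \sigma^2/(PYQ)_{i,j}^2$. -/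
open MeasureTheory ProbabilityTheory Matrix

noncomputable def frobInner {n m : ℕ} (A B : Matrix (Fin n) (Fin m) ℝ) : ℝ :=
  ∑ i, ∑ j, A i j * B i j

lemma frobSq_orth {n m : ℕ} (M : Matrix (Fin n) (Fin m) ℝ)
    (P : Matrix (Fin n) (Fin n) ℝ) (Q : Matrix (Fin m) (Fin m) ℝ)
    (hP : P * Pᵀ = 1) (hQt : Qᵀ * Q = 1) :
    frobSq (Pᵀ * M * Qᵀ) = frobSq M := by
  have htr : ∀ (k l : ℕ) (A : Matrix (Fin k) (Fin l) ℝ),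
      frobSq A = Matrix.trace (Aᵀ * A) := by
    intro k l A
    simp [frobSq, Matrix.trace, Matrix.diag, Matrix.mul_apply, sq]
    exact Finset.sum_comm
  rw [htr, htr]
  have h1 : (Pᵀ * M * Qᵀ)ᵀ * (Pᵀ * M * Qᵀ) = Q * (Mᵀ * M) * Qᵀ := by
    simp only [Matrix.transpose_mul, Matrix.transpose_transpose, Matrix.mul_assoc]
    rw [← Matrix.mul_assoc P Pᵀ, hP, Matrix.one_mul]
  rw [h1, Matrix.trace_mul_cycle, ← Matrix.mul_assoc, hQt, Matrix.one_mul]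

theorem stmt17 {n m : ℕ} (Y : Matrix (Fin n) (Fin m) ℝ)
    (P : Matrix (Fin n) (Fin n) ℝ) (Q : Matrix (Fin m) (Fin m) ℝ)
    (hP : P * Pᵀ = 1) (hQ : Q * Qᵀ = 1) (σ : ℝ)
    (hYnz : ∀ i j, (P * Y * Q) i j ≠ 0) :
    ∀ Θ : Matrix (Fin n) (Fin m) ℝ,
      frobSq (Pᵀ * Matrix.hadamard
            (Matrix.of fun i j => 1 - σ ^ 2 / ((P * Y * Q) i j) ^ 2) (P * Y * Q) * Qᵀ - Y)
          + 2 * σ ^ 2 * frobInner (Matrix.of fun _ _ => (1 : ℝ))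
            (Matrix.of fun i j => 1 - σ ^ 2 / ((P * Y * Q) i j) ^ 2)
        ≤ frobSq (Pᵀ * Matrix.hadamard Θ (P * Y * Q) * Qᵀ - Y)
          + 2 * σ ^ 2 * frobInner (Matrix.of fun _ _ => (1 : ℝ)) Θ := by
  intro Θ
  have hPt : Pᵀ * P = 1 := mul_eq_one_comm.mp hP
  have hQt : Qᵀ * Q = 1 := mul_eq_one_comm.mp hQ
  set Z : Matrix (Fin n) (Fin m) ℝ := P * Y * Q with hZ
  have hYeq : Pᵀ * Z * Qᵀ = Y := by
    rw [hZ]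
    rw [← Matrix.mul_assoc, ← Matrix.mul_assoc, hPt, Matrix.one_mul,
      Matrix.mul_assoc, hQ, Matrix.mul_one]
  have key : ∀ A : Matrix (Fin n) (Fin m) ℝ,
      frobSq (Pᵀ * A * Qᵀ - Y) = ∑ i, ∑ j, (A i j - Z i j) ^ 2 := by
    intro A
    have h1 : Pᵀ * A * Qᵀ - Y = Pᵀ * (A - Z) * Qᵀ := by
      rw [Matrix.mul_sub, Matrix.sub_mul, hYeq]
    rw [h1, frobSq_orth _ P Q hP hQt]
    simp [frobSq]
  rw [key, key]
  have expand : ∀ B : Matrix (Fin n) (Fin m) ℝ,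
      (∑ i, ∑ j, (Matrix.hadamard B Z i j - Z i j) ^ 2)
        + 2 * σ ^ 2 * frobInner (Matrix.of fun _ _ => (1 : ℝ)) B
        = ∑ i, ∑ j, ((B i j * Z i j - Z i j) ^ 2 + 2 * σ ^ 2 * B i j) := by
    intro B
    simp [frobInner, Matrix.hadamard, Finset.mul_sum, Finset.sum_add_distrib]
  rw [expand, expand]
  apply Finset.sum_le_sum
  intro i _
  apply Finset.sum_le_sum
  intro j _
  have hz : Z i j ≠ 0 := hYnz i j
  set z := Z i j
  set t := Θ i j
  have hof : (Matrix.of fun i j => 1 - σ ^ 2 / (Z i j) ^ 2) i j = 1 - σ ^ 2 / z ^ 2 := rfl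
  rw [hof]
  have hz2 : z ^ 2 ≠ 0 := pow_ne_zero 2 hz
  have h1 : ((1 - σ ^ 2 / z ^ 2) * z - z) = -(σ ^ 2 / z) := by
    field_simp
    ring
  rw [h1]
  have hs := sq_nonneg (z * (t - 1) + σ ^ 2 / z)
  have hd : (σ ^ 2 / z) * z = σ ^ 2 := div_mul_cancel₀ _ hz
  have hd2 : (σ ^ 2 / z ^ 2) * z ^ 2 = σ ^ 2 := div_mul_cancel₀ _ hz2
  have h4 : (σ ^ 2 / z) ^ 2 = σ ^ 2 * (σ ^ 2 / z ^ 2) := by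
    field_simp
  have h5 : z * (t - 1) * (σ ^ 2 / z) = σ ^ 2 * (t - 1) := by
    field_simp
  nlinarith [hs, h4, h5]
end
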